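/- The triangle formed by three ants moving according to rule B has constant area: the directional derivative of F along each rule-B vector field Zᵢ vanishes identically (DF(m)(Zᵢ(m)) = 0 for all m and i = 1,2,3), and consequently, for every differentiable curve γ : I → ℝ⁶ on an interval I such that for each t the velocity γ'(t) lies in the real linear span of Z₁(γ(t)), Z₂(γ(t)), Z₃(γ(t)), the function t ↦ F(γ(t)) is constant on I. -/

import Mathlib

def xc (i : Fin 3) : Fin 6 := ⟨2 * i.val, by have := i.isLt; omega⟩

def yc (i : Fin 3) : Fin 6 := ⟨2 * i.val + 1, by have := i.isLt; omega⟩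

/-- Rule-B vector fields. -/
def ZB (i : Fin 3) (m : Fin 6 → ℝ) : Fin 6 → ℝ := fun j =>
  if j = xc i then m (xc (i + 1)) - m (xc (i + 2))
  else if j = yc i then m (yc (i + 1)) - m (yc (i + 2))
  else 0

/-- A constant multiple of the signed area: `F(m) = Σᵢ (yᵢ x_{i+1} − xᵢ y_{i+1})`. -/
def F (m : Fin 6 → ℝ) : ℝ :=
  ∑ i : Fin 3, (m (yc i) * m (xc (i + 1)) - m (xc i) * m (yc (i + 1)))

/-!
Each `Zᵢ` moves only the vertex `Pᵢ`, and moves it parallel to the opposite side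
`P_{i+1} P_{i+2}`, so it keeps the height over that side, hence the area, fixed to first order:
`DF(m)(Zᵢ(m)) = 0`. A curve tangent to the span of the `Zᵢ` therefore has `(F ∘ γ)' = 0` on `I`,
and a function with vanishing derivative on an interval is constant there.
-/

theorem Set.OrdConnected.eq_of_forall_hasDerivAt_eq_zero {E : Type*} [NormedAddCommGroup E]
    [NormedSpace ℝ E] {f : ℝ → E} {I : Set ℝ} (hI : I.OrdConnected)
    (hf : ∀ t ∈ I, HasDerivAt f 0 t) {s t : ℝ} (hs : s ∈ I) (ht : t ∈ I) : f s = f t := by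
  have h := hI.convex.norm_image_sub_le_of_norm_hasDerivWithin_le
    (fun u hu => (hf u hu).hasDerivWithinAt) (fun _ _ => norm_zero.le) hs ht
  rwa [zero_mul, norm_le_zero_iff, sub_eq_zero, eq_comm] at h

noncomputable def areaDeriv (m : Fin 6 → ℝ) : (Fin 6 → ℝ) →L[ℝ] ℝ :=
  ∑ i : Fin 3,
    ((m (yc i) • ContinuousLinearMap.proj (xc (i + 1)) +
      m (xc (i + 1)) • ContinuousLinearMap.proj (yc i)) -
     (m (xc i) • ContinuousLinearMap.proj (yc (i + 1)) +
      m (yc (i + 1)) • ContinuousLinearMap.proj (xc i)))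

theorem hasFDerivAt_F (m : Fin 6 → ℝ) : HasFDerivAt F (areaDeriv m) m := by
  have hproj (j : Fin 6) := hasFDerivAt_apply (𝕜 := ℝ) j m
  exact HasFDerivAt.fun_sum fun i _ =>
    ((hproj (yc i)).mul (hproj (xc (i + 1)))).sub ((hproj (xc i)).mul (hproj (yc (i + 1))))

theorem areaDeriv_apply_ZB (m : Fin 6 → ℝ) (i : Fin 3) : areaDeriv m (ZB i m) = 0 := by
  fin_cases i <;>
    simp +decide [areaDeriv, ZB, xc, yc, Fin.sum_univ_three] <;> ring

theorem span_ZB_le_ker_areaDeriv (m : Fin 6 → ℝ) :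
    Submodule.span ℝ ({ZB 0 m, ZB 1 m, ZB 2 m} : Set (Fin 6 → ℝ)) ≤
      LinearMap.ker (areaDeriv m : (Fin 6 → ℝ) →ₗ[ℝ] ℝ) := by
  rw [Submodule.span_le]
  rintro v (rfl | rfl | rfl) <;> exact areaDeriv_apply_ZB _ _

/-- In `ℝ`, a set is an interval iff it is order-connected. -/
theorem ruleB_area_constant :
    (∀ (m : Fin 6 → ℝ) (i : Fin 3), fderiv ℝ F m (ZB i m) = 0) ∧
    (∀ (I : Set ℝ), I.OrdConnected →
      ∀ (γ γ' : ℝ → (Fin 6 → ℝ)),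
      (∀ t ∈ I, HasDerivAt γ (γ' t) t) →
      (∀ t ∈ I, γ' t ∈
        Submodule.span ℝ ({ZB 0 (γ t), ZB 1 (γ t), ZB 2 (γ t)} : Set (Fin 6 → ℝ))) →
      ∀ s ∈ I, ∀ t ∈ I, F (γ s) = F (γ t)) := by
  refine ⟨fun m i => by rw [(hasFDerivAt_F m).fderiv, areaDeriv_apply_ZB], ?_⟩
  intro I hI γ γ' hγ hspan s hs t ht
  refine hI.eq_of_forall_hasDerivAt_eq_zero (f := F ∘ γ) (fun u hu => ?_) hs ht
  have htangent : areaDeriv (γ u) (γ' u) = 0 := span_ZB_le_ker_areaDeriv (γ u) (hspan u hu)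
  simpa [htangent] using (hasFDerivAt_F (γ u)).comp_hasDerivAt u (hγ u hu)
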